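/- arXiv:math/0307152 — 3 statements merged into one kernel-verified Lean document; each statement's English description precedes it below -/
import Mathlib

section
/- Let H and H' be real Hilbert spaces, K : H → H' a bounded linear operator with ‖K*K‖ < 1, g ∈ H', p ≥ 1, (φ_γ)_{γ∈Γ} an orthonormal basis of H, w = (w_γ)_{γ∈Γ} a sequence of strictly positive weights, and a ∈ H. Define the surrogate functional Φ^SUR_{w,p}(f; a) = ‖Kf − g‖² + Σ_{γ∈Γ} w_γ |⟨f,φ_γ⟩|^p + ‖f − a‖² − ‖K(f − a)‖². Then Φ^SUR_{w,p}(·; a) has a unique minimizer in H, given by f = S_{w,p}(a + K*(g − Ka)). Moreover, for all h ∈ H, Φ^SUR_{w,p}(f + h; a) ≥ Φ^SUR_{w,p}(f; a) + ‖h‖². -/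
open scoped ENNReal
open Filter

noncomputable def scalarF (w p : ℝ) (x : ℝ) : ℝ :=
  x + w * p / 2 * (Real.sign x * |x| ^ (p - 1))

noncomputable def scalarS (w p : ℝ) : ℝ → ℝ :=
  if p = 1 then
    fun x => if w / 2 ≤ x then x - w / 2 else if x ≤ -(w / 2) then x + w / 2 else 0
  else Function.invFun (scalarF w p)

lemma mySign_mul_self (s : ℝ) : Real.sign s * s = |s| := by
  rcases lt_trichotomy s 0 with h | h | h
  · rw [Real.sign_of_neg h, abs_of_neg h]; ring
  · simp [h]
  · rw [Real.sign_of_pos h, abs_of_pos h]; ring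

lemma sign_mul_le_abs (s x : ℝ) : Real.sign s * x ≤ |x| := by
  rcases lt_trichotomy s 0 with h | h | h
  · rw [Real.sign_of_neg h]; simpa using neg_le_abs x
  · simp [h, abs_nonneg]
  · rw [Real.sign_of_pos h]; simpa using le_abs_self x

lemma bern {p : ℝ} (hp : 1 ≤ p) {a c : ℝ} (ha : 0 ≤ a) (hc : 0 ≤ c) :
    c ^ p + p * c ^ (p - 1) * (a - c) ≤ a ^ p := by
  rcases eq_or_lt_of_le hc with hc0 | hc0
  · rcases eq_or_lt_of_le hp with hp1 | hp1
    · rw [← hc0, ← hp1]; simp [Real.rpow_one]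
    · rw [← hc0]
      rw [Real.zero_rpow (by positivity), Real.zero_rpow (by linarith)]
      simpa using Real.rpow_nonneg ha p
  · have key := one_add_mul_self_le_rpow_one_add
      (s := a / c - 1) (by have h0 : (0:ℝ) ≤ a / c := div_nonneg ha hc; linarith) hp
    have h1 : (1 : ℝ) + (a / c - 1) = a / c := by ring
    rw [h1, Real.div_rpow ha hc] at key
    have h2 : c ^ p = c ^ (p - 1) * c := by
      rw [← Real.rpow_add_one hc0.ne' (p-1)]; ring_nf
    have hcp : (0:ℝ) < c ^ p := Real.rpow_pos_of_pos hc0 p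
    have key2 : c ^ p * (1 + p * (a / c - 1)) ≤ a ^ p := by
      rw [mul_comm]
      exact (le_div_iff₀ hcp).mp key
    have h3 : c ^ p * (1 + p * (a / c - 1)) = c ^ p + p * (c ^ p / c) * (a - c) := by
      field_simp
    rw [h3, ← Real.rpow_sub_one hc0.ne'] at key2
    exact key2

lemma abs_rpow_subgrad {p : ℝ} (hp : 1 ≤ p) (s x : ℝ) :
    |s| ^ p + p * (Real.sign s * |s| ^ (p - 1)) * (x - s) ≤ |x| ^ p := by
  have key := bern hp (abs_nonneg x) (abs_nonneg s)
  have h1 : Real.sign s * (x - s) ≤ |x| - |s| := by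
    rw [mul_sub, mySign_mul_self]
    linarith [sign_mul_le_abs s x]
  have h2 : (0:ℝ) ≤ p * |s| ^ (p - 1) := by positivity
  nlinarith [mul_le_mul_of_nonneg_left h1 h2]

lemma scalarF_surj {w p : ℝ} (hw : 0 < w) (hp : 1 < p) :
    Function.Surjective (scalarF w p) := by
  have hodd : ∀ x, scalarF w p (-x) = -scalarF w p x := by
    intro x
    simp only [scalarF, Real.sign_neg, abs_neg]
    ring
  have hcont : Continuous fun x : ℝ => x + w * p / 2 * x ^ (p - 1) := by
    refine continuous_id.add (continuous_const.mul ?_)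
    exact continuous_iff_continuousAt.2 fun x =>
      Real.continuousAt_rpow_const x _ (Or.inr (by linarith))
  have hagree : ∀ x : ℝ, 0 ≤ x → scalarF w p x = x + w * p / 2 * x ^ (p - 1) := by
    intro x hx
    rcases eq_or_lt_of_le hx with h | h
    · rw [← h]
      simp [scalarF, Real.sign_zero, Real.zero_rpow (show p - 1 ≠ 0 by linarith)]
    · rw [scalarF, Real.sign_of_pos h, abs_of_pos h]; ring
  have hpos : ∀ m : ℝ, 0 ≤ m → ∃ x, scalarF w p x = m := by
    intro m hm
    have h0 : scalarF w p 0 = 0 := by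
      simp [scalarF, Real.sign_zero]
    have hFm : m ≤ scalarF w p m := by
      rw [hagree m hm]
      have : (0:ℝ) ≤ w * p / 2 * m ^ (p - 1) := by positivity
      linarith
    have hConOn : ContinuousOn (scalarF w p) (Set.Icc 0 m) := by
      refine (hcont.continuousOn).congr ?_
      intro x hx
      exact hagree x hx.1
    have := intermediate_value_Icc hm hConOn
    have hmem : m ∈ Set.Icc (scalarF w p 0) (scalarF w p m) := by
      rw [h0]; exact ⟨hm, hFm⟩
    obtain ⟨x, _, hx⟩ := this hmem
    exact ⟨x, hx⟩
  intro m
  rcases le_total 0 m with hm | hm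
  · exact hpos m hm
  · obtain ⟨x, hx⟩ := hpos (-m) (by linarith)
    exact ⟨-x, by rw [hodd, hx, neg_neg]⟩

lemma scalarS_spec {w p : ℝ} (hw : 0 < w) (hp : 1 < p) (m : ℝ) :
    scalarF w p (scalarS w p m) = m := by
  rw [scalarS, if_neg hp.ne']
  exact Function.invFun_eq (scalarF_surj hw hp m)

lemma scalar_key {w p : ℝ} (hw : 0 < w) (hp : 1 ≤ p) (m x : ℝ) :
    w * |scalarS w p m| ^ p + 2 * (m - scalarS w p m) * (x - scalarS w p m)
      ≤ w * |x| ^ p := by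
  rcases eq_or_lt_of_le hp with hp1 | hp1
  · -- p = 1
    subst hp1
    have hsdef : scalarS w 1 m
        = if w / 2 ≤ m then m - w / 2 else if m ≤ -(w / 2) then m + w / 2 else 0 := by
      rw [scalarS, if_pos rfl]
    simp only [hsdef, Real.rpow_one]
    split_ifs with h1 h2
    · -- s = m - w/2, m ≥ w/2
      have habs : |m - w / 2| = m - w / 2 := abs_of_nonneg (by linarith)
      rw [habs]
      nlinarith [le_abs_self x, neg_abs_le x]
    · -- s = m + w/2, m ≤ -w/2
      have habs : |m + w / 2| = -(m + w / 2) := abs_of_nonpos (by linarith)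
      rw [habs]
      nlinarith [le_abs_self x, neg_abs_le x]
    · -- s = 0, |m| < w/2
      push_neg at h1 h2
      simp only [abs_zero, sub_zero, mul_zero]
      nlinarith [le_abs_self x, neg_abs_le x, abs_nonneg x]
  · -- p > 1
    set s := scalarS w p m with hs
    have hFs := scalarS_spec hw hp1 m
    have hms : m - s = w * p / 2 * (Real.sign s * |s| ^ (p - 1)) := by
      rw [scalarF] at hFs; linarith
    have key := abs_rpow_subgrad hp s x
    have key2 := mul_le_mul_of_nonneg_left key hw.le
    rw [hms]
    nlinarith [key2]

lemma scalar_key_bounds {w p : ℝ} (hw : 0 < w) (hp : 1 ≤ p) (m : ℝ) :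
    |scalarS w p m| ≤ |m| ∧ w * |scalarS w p m| ^ p ≤ 2 * m ^ 2 := by
  have key := scalar_key hw hp m 0
  set s := scalarS w p m with hs
  rw [abs_zero, Real.zero_rpow (by positivity), mul_zero] at key
  have h0 : (0:ℝ) ≤ w * |s| ^ p := by positivity
  have h1 : s ^ 2 ≤ s * m := by nlinarith
  have h2 : s * m ≤ |s| * |m| := by
    calc s * m ≤ |s * m| := le_abs_self _
    _ = |s| * |m| := abs_mul s m
  constructor
  · nlinarith [abs_nonneg s, abs_nonneg m, sq_abs s]
  · nlinarith [abs_nonneg s, abs_nonneg m, sq_abs s, sq_abs m]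
noncomputable def shrinkOp {H : Type*} [NormedAddCommGroup H] [InnerProductSpace ℝ H]
    {Γ : Type*} (b : HilbertBasis Γ ℝ H) (w : Γ → ℝ) (p : ℝ) (h : H) : H :=
  ∑' γ, scalarS (w γ) p (b.repr h γ) • b γ

noncomputable def Phi {H H' : Type*} [NormedAddCommGroup H] [InnerProductSpace ℝ H]
    [NormedAddCommGroup H'] [InnerProductSpace ℝ H']
    {Γ : Type*} (K : H →L[ℝ] H') (g : H') (b : HilbertBasis Γ ℝ H)
    (w : Γ → ℝ) (p : ℝ) (f : H) : ℝ≥0∞ :=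
  ENNReal.ofReal (‖K f - g‖ ^ 2) + ∑' γ, ENNReal.ofReal (w γ * |b.repr f γ| ^ p)

noncomputable def PhiSur {H H' : Type*} [NormedAddCommGroup H] [InnerProductSpace ℝ H]
    [NormedAddCommGroup H'] [InnerProductSpace ℝ H']
    {Γ : Type*} (K : H →L[ℝ] H') (g : H') (b : HilbertBasis Γ ℝ H)
    (w : Γ → ℝ) (p : ℝ) (f a : H) : ℝ≥0∞ :=
  Phi K g b w p f + ENNReal.ofReal (‖f - a‖ ^ 2 - ‖K (f - a)‖ ^ 2)

/-- The surrogate functional `Φ^SUR(·; a)` has a unique minimizer, given by the shrinkage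
of `a + K*(g - Ka)`, and the minimizer satisfies a quadratic growth bound. -/
theorem surrogate_functional_minimizer
    {H H' : Type*} [NormedAddCommGroup H] [InnerProductSpace ℝ H] [CompleteSpace H]
    [NormedAddCommGroup H'] [InnerProductSpace ℝ H'] [CompleteSpace H']
    {Γ : Type*} (b : HilbertBasis Γ ℝ H)
    (K : H →L[ℝ] H') (hK : ‖(ContinuousLinearMap.adjoint K).comp K‖ < 1) (g : H')
    (p : ℝ) (hp : 1 ≤ p) (w : Γ → ℝ) (hw : ∀ γ, 0 < w γ) (a : H) :
    (∀ f' : H,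
        PhiSur K g b w p (shrinkOp b w p (a + (ContinuousLinearMap.adjoint K) (g - K a))) a
          ≤ PhiSur K g b w p f' a) ∧
    (∀ f' : H, (∀ f'' : H, PhiSur K g b w p f' a ≤ PhiSur K g b w p f'' a) →
        f' = shrinkOp b w p (a + (ContinuousLinearMap.adjoint K) (g - K a))) ∧
    (∀ h : H,
        PhiSur K g b w p (shrinkOp b w p (a + (ContinuousLinearMap.adjoint K) (g - K a))) a
            + ENNReal.ofReal (‖h‖ ^ 2)
          ≤ PhiSur K g b w p
              (shrinkOp b w p (a + (ContinuousLinearMap.adjoint K) (g - K a)) + h) a) := by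
  classical
  set m : H := a + (ContinuousLinearMap.adjoint K) (g - K a) with hm
  set s : Γ → ℝ := fun γ => scalarS (w γ) p (b.repr m γ) with hsdef
  -- Parseval
  have hPar : ∀ x y : H, HasSum (fun γ => b.repr x γ * b.repr y γ) (inner ℝ x y : ℝ) := by
    intro x y
    have h := b.hasSum_inner_mul_inner x y
    have e : ∀ γ, (inner ℝ x (b γ) : ℝ) * (inner ℝ (b γ) y : ℝ) = b.repr x γ * b.repr y γ := by
      intro γ
      rw [b.repr_apply_apply, b.repr_apply_apply, real_inner_comm]
    simpa [e] using h
  have hr_sq : Summable fun γ => (b.repr m γ) ^ 2 := by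
    have := (hPar m m).summable
    simpa [pow_two] using this
  have hkey : ∀ γ (x : ℝ), w γ * |s γ| ^ p + 2 * (b.repr m γ - s γ) * (x - s γ)
      ≤ w γ * |x| ^ p := fun γ x => scalar_key (hw γ) hp _ x
  have habs : ∀ γ, |s γ| ≤ |b.repr m γ| := fun γ => (scalar_key_bounds (hw γ) hp _).1
  have hbnd : ∀ γ, w γ * |s γ| ^ p ≤ 2 * (b.repr m γ) ^ 2 :=
    fun γ => (scalar_key_bounds (hw γ) hp _).2
  have hs_sq : Summable fun γ => (s γ) ^ 2 := by
    refine hr_sq.of_nonneg_of_le (fun γ => sq_nonneg _) (fun γ => ?_)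
    rw [← sq_abs (s γ), ← sq_abs (b.repr m γ)]
    exact pow_le_pow_left₀ (abs_nonneg _) (habs γ) 2
  have hmem : Memℓp s 2 := by
    apply memℓp_gen
    have e : ∀ γ, ‖s γ‖ ^ ((2 : ℝ≥0∞).toReal) = (s γ) ^ 2 := by
      intro γ
      rw [show ((2 : ℝ≥0∞).toReal) = ((2 : ℕ) : ℝ) by norm_num, Real.rpow_natCast,
        Real.norm_eq_abs, sq_abs]
    simpa [e] using hs_sq
  set sl : lp (fun _ : Γ => ℝ) 2 := ⟨s, hmem⟩ with hsl
  set F₀ : H := shrinkOp b w p m with hF0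
  have hF0' : F₀ = b.repr.symm sl := by
    rw [hF0, shrinkOp]
    exact (b.hasSum_repr_symm sl).tsum_eq
  have hrepr : ∀ γ, b.repr F₀ γ = s γ := by
    intro γ
    rw [hF0', LinearIsometryEquiv.apply_symm_apply]
  have hwnn : ∀ γ (x : ℝ), 0 ≤ w γ * |x| ^ p :=
    fun γ x => mul_nonneg (hw γ).le (Real.rpow_nonneg (abs_nonneg _) _)
  have hWsum : Summable fun γ => w γ * |s γ| ^ p :=
    Summable.of_nonneg_of_le (fun γ => hwnn γ _) hbnd (hr_sq.mul_left 2)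
  have hKle : ∀ x : H, ‖K x‖ ^ 2 ≤ ‖x‖ ^ 2 := by
    intro x
    set T := (ContinuousLinearMap.adjoint K).comp K with hT
    have h1 : (inner ℝ (K x) (K x) : ℝ) = inner ℝ x (T x) := by
      rw [hT, ContinuousLinearMap.comp_apply, ContinuousLinearMap.adjoint_inner_right]
    have h2 := real_inner_le_norm x (T x)
    have h3 := T.le_opNorm x
    have h4 := real_inner_self_eq_norm_sq (K x)
    have h5 : ‖x‖ * ‖T x‖ ≤ ‖x‖ * (‖T‖ * ‖x‖) :=
      mul_le_mul_of_nonneg_left h3 (norm_nonneg x)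
    nlinarith [norm_nonneg x, sq_nonneg ‖x‖]
  have hB : ∀ x : H, 0 ≤ ‖x - a‖ ^ 2 - ‖K (x - a)‖ ^ 2 := fun x => by linarith [hKle (x - a)]
  set C : ℝ := ‖g‖ ^ 2 + ‖a‖ ^ 2 - ‖K a‖ ^ 2 with hC
  have hAB : ∀ f : H, ‖K f - g‖ ^ 2 + (‖f - a‖ ^ 2 - ‖K (f - a)‖ ^ 2)
      = ‖f‖ ^ 2 - 2 * (inner ℝ f m : ℝ) + C := by
    intro f
    have e1 := norm_sub_sq_real (K f) g
    have e2 := norm_sub_sq_real f a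
    have e3 : ‖K (f - a)‖ ^ 2 = ‖K f‖ ^ 2 - 2 * (inner ℝ (K f) (K a) : ℝ) + ‖K a‖ ^ 2 := by
      rw [map_sub]; exact norm_sub_sq_real (K f) (K a)
    have e4 : (inner ℝ f m : ℝ)
        = (inner ℝ f a : ℝ) + ((inner ℝ (K f) g : ℝ) - (inner ℝ (K f) (K a) : ℝ)) := by
      rw [hm, inner_add_right, ContinuousLinearMap.adjoint_inner_right, inner_sub_right]
    have e5 : ‖f‖ ^ 2 = (inner ℝ f f : ℝ) := (real_inner_self_eq_norm_sq f).symm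
    rw [hC]
    linarith [e1, e2, e3, e4]
  -- core real inequality
  have hcore : ∀ f : H, Summable (fun γ => w γ * |b.repr f γ| ^ p) →
      (‖K F₀ - g‖ ^ 2 + (‖F₀ - a‖ ^ 2 - ‖K (F₀ - a)‖ ^ 2) + ∑' γ, w γ * |s γ| ^ p)
          + ‖f - F₀‖ ^ 2
        ≤ ‖K f - g‖ ^ 2 + (‖f - a‖ ^ 2 - ‖K (f - a)‖ ^ 2)
          + ∑' γ, w γ * |b.repr f γ| ^ p := by
    intro f hsum
    have hinner : HasSum (fun γ => (b.repr f γ - s γ) * (b.repr m γ - s γ))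
        (inner ℝ (f - F₀) (m - F₀) : ℝ) := by
      have h := hPar (f - F₀) (m - F₀)
      have e : (fun γ => (b.repr f γ - s γ) * (b.repr m γ - s γ))
          = fun γ => b.repr (f - F₀) γ * b.repr (m - F₀) γ := by
        funext γ
        rw [map_sub, map_sub, lp.coeFn_sub, lp.coeFn_sub, Pi.sub_apply, Pi.sub_apply, hrepr]
      rw [e]
      exact h
    have hsum2 : Summable fun γ => 2 * (b.repr m γ - s γ) * (b.repr f γ - s γ) :=
      (hinner.summable.mul_left 2).congr (fun γ => by ring)
    have hsum_lhs : Summable (fun γ =>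
        w γ * |s γ| ^ p + 2 * (b.repr m γ - s γ) * (b.repr f γ - s γ)) := hWsum.add hsum2
    have hts : ∑' γ, (w γ * |s γ| ^ p + 2 * (b.repr m γ - s γ) * (b.repr f γ - s γ))
        ≤ ∑' γ, w γ * |b.repr f γ| ^ p :=
      Summable.tsum_le_tsum (fun γ => hkey γ (b.repr f γ)) hsum_lhs hsum
    have hts2 : ∑' γ, (w γ * |s γ| ^ p + 2 * (b.repr m γ - s γ) * (b.repr f γ - s γ))
        = (∑' γ, w γ * |s γ| ^ p) + 2 * (inner ℝ (f - F₀) (m - F₀) : ℝ) := by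
      rw [Summable.tsum_add hWsum hsum2]
      congr 1
      calc ∑' γ, 2 * (b.repr m γ - s γ) * (b.repr f γ - s γ)
          = ∑' γ, 2 * ((b.repr f γ - s γ) * (b.repr m γ - s γ)) :=
            tsum_congr fun γ => by ring
        _ = 2 * ∑' γ, (b.repr f γ - s γ) * (b.repr m γ - s γ) := tsum_mul_left
        _ = 2 * (inner ℝ (f - F₀) (m - F₀) : ℝ) := by rw [hinner.tsum_eq]
    have hi1 : (inner ℝ (f - F₀) (m - F₀) : ℝ)
        = (inner ℝ f m : ℝ) - (inner ℝ f F₀ : ℝ) - (inner ℝ F₀ m : ℝ) + ‖F₀‖ ^ 2 := by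
      rw [inner_sub_right, inner_sub_left, inner_sub_left, real_inner_self_eq_norm_sq]
      ring
    have hi2 : ‖f - F₀‖ ^ 2 = ‖f‖ ^ 2 - 2 * (inner ℝ f F₀ : ℝ) + ‖F₀‖ ^ 2 :=
      norm_sub_sq_real f F₀
    have hmain : (∑' γ, w γ * |s γ| ^ p) + 2 * (inner ℝ (f - F₀) (m - F₀) : ℝ)
        ≤ ∑' γ, w γ * |b.repr f γ| ^ p := by rw [← hts2]; exact hts
    rw [hAB f, hAB F₀, hi1] at *
    linarith [hmain, hi2]
  -- ENNReal bookkeeping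
  have hPhiFin : ∀ f : H, Summable (fun γ => w γ * |b.repr f γ| ^ p) →
      PhiSur K g b w p f a = ENNReal.ofReal
        (‖K f - g‖ ^ 2 + (‖f - a‖ ^ 2 - ‖K (f - a)‖ ^ 2) + ∑' γ, w γ * |b.repr f γ| ^ p) := by
    intro f hsum
    have hnn : ∀ γ, 0 ≤ w γ * |b.repr f γ| ^ p := fun γ => hwnn γ _
    rw [PhiSur, Phi, ← ENNReal.ofReal_tsum_of_nonneg hnn hsum,
      ← ENNReal.ofReal_add (by positivity) (tsum_nonneg hnn),
      ← ENNReal.ofReal_add (add_nonneg (by positivity) (tsum_nonneg hnn)) (hB f)]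
    congr 1
    ring
  have hsumF : Summable (fun γ => w γ * |b.repr F₀ γ| ^ p) := by
    simpa [hrepr] using hWsum
  have hPstar : PhiSur K g b w p F₀ a = ENNReal.ofReal
      (‖K F₀ - g‖ ^ 2 + (‖F₀ - a‖ ^ 2 - ‖K (F₀ - a)‖ ^ 2) + ∑' γ, w γ * |s γ| ^ p) := by
    rw [hPhiFin F₀ hsumF]
    simp only [hrepr]
  have hPne : PhiSur K g b w p F₀ a ≠ ⊤ := by
    rw [hPstar]; exact ENNReal.ofReal_ne_top
  have hTop : ∀ f : H, ¬ Summable (fun γ => w γ * |b.repr f γ| ^ p) →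
      PhiSur K g b w p f a = ⊤ := by
    intro f hsum
    rw [PhiSur, Phi]
    suffices h : (∑' γ, ENNReal.ofReal (w γ * |b.repr f γ| ^ p)) = ⊤ by
      rw [h]; simp
    by_contra hne
    apply hsum
    refine (ENNReal.summable_toReal hne).congr fun γ => ?_
    rw [ENNReal.toReal_ofReal (hwnn γ _)]
  have key3 : ∀ h : H, PhiSur K g b w p F₀ a + ENNReal.ofReal (‖h‖ ^ 2)
      ≤ PhiSur K g b w p (F₀ + h) a := by
    intro h
    by_cases hsum : Summable (fun γ => w γ * |b.repr (F₀ + h) γ| ^ p)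
    · rw [hPhiFin _ hsum, hPstar,
        ← ENNReal.ofReal_add
          (add_nonneg (add_nonneg (by positivity) (hB F₀))
            (tsum_nonneg fun γ => hwnn γ _)) (sq_nonneg _)]
      apply ENNReal.ofReal_le_ofReal
      have hc := hcore (F₀ + h) hsum
      have e : F₀ + h - F₀ = h := by abel
      rw [e] at hc
      linarith [hc]
    · rw [hTop _ hsum]; exact le_top
  refine ⟨?_, ?_, key3⟩
  · intro f'
    have e : F₀ + (f' - F₀) = f' := by abel
    calc PhiSur K g b w p F₀ a
        ≤ PhiSur K g b w p F₀ a + ENNReal.ofReal (‖f' - F₀‖ ^ 2) := le_self_add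
      _ ≤ PhiSur K g b w p (F₀ + (f' - F₀)) a := key3 _
      _ = PhiSur K g b w p f' a := by rw [e]
  · intro f' hf'
    have e : F₀ + (f' - F₀) = f' := by abel
    have h1 := key3 (f' - F₀)
    rw [e] at h1
    have h3 : PhiSur K g b w p F₀ a + ENNReal.ofReal (‖f' - F₀‖ ^ 2)
        ≤ PhiSur K g b w p F₀ a + 0 := by simpa using h1.trans (hf' F₀)
    have h4 := (ENNReal.add_le_add_iff_left hPne).mp h3
    have h5 : ‖f' - F₀‖ ^ 2 ≤ 0 :=
      ENNReal.ofReal_eq_zero.mp (le_antisymm h4 (by simp))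
    have h7 : ‖f' - F₀‖ = 0 := by nlinarith [norm_nonneg (f' - F₀)]
    exact sub_eq_zero.mp (norm_eq_zero.mp h7)
end

section
/- Let H and H' be real Hilbert spaces, K : H → H' a bounded linear operator with operator norm strictly less than 1, g ∈ H', p ≥ 1, (φ_γ)_{γ∈Γ} an orthonormal basis of H, and w = (w_γ)_{γ∈Γ} a sequence of strictly positive weights. Then the mapping T : H → H defined by T f = S_{w,p}(f + K*(g − Kf)) is non-expansive: for all v, v' ∈ H, ‖Tv − Tv'‖ ≤ ‖v − v'‖. -/
open scoped ENNReal
open Filter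

lemma sign_nonneg_mul {p x : ℝ} (hx : 0 ≤ x) : 0 ≤ Real.sign x * |x| ^ (p - 1) := by
  rcases eq_or_lt_of_le hx with h | h
  · simp [← h, Real.sign_zero]
  · rw [Real.sign_of_pos h]
    positivity

lemma sign_nonpos_mul {p x : ℝ} (hx : x ≤ 0) : Real.sign x * |x| ^ (p - 1) ≤ 0 := by
  rcases eq_or_lt_of_le hx with h | h
  · simp [h, Real.sign_zero]
  · rw [Real.sign_of_neg h]
    have : (0:ℝ) ≤ |x| ^ (p - 1) := Real.rpow_nonneg (abs_nonneg x) _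
    linarith

lemma hmono {p : ℝ} (hp : 1 ≤ p) :
    Monotone (fun x : ℝ => Real.sign x * |x| ^ (p - 1)) := by
  intro x y hxy
  dsimp only
  rcases le_or_gt x 0 with hx | hx
  · rcases le_or_gt y 0 with hy | hy
    · rcases eq_or_lt_of_le hy with h | h
      · rw [h]
        simpa [Real.sign_zero] using sign_nonpos_mul hx
      · have hx' : x < 0 := lt_of_le_of_lt hxy h
        rw [Real.sign_of_neg h, Real.sign_of_neg hx']
        have : |y| ≤ |x| := by
          rw [abs_of_neg h, abs_of_neg hx']; linarith
        have := Real.rpow_le_rpow (abs_nonneg y) this (by linarith : (0:ℝ) ≤ p - 1)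
        linarith
    · exact le_trans (sign_nonpos_mul hx) (sign_nonneg_mul hy.le)
  · have hy : 0 < y := lt_of_lt_of_le hx hxy
    rw [Real.sign_of_pos hx, Real.sign_of_pos hy]
    have : |x| ≤ |y| := by rw [abs_of_pos hx, abs_of_pos hy]; exact hxy
    simpa using Real.rpow_le_rpow (abs_nonneg x) this (by linarith : (0:ℝ) ≤ p - 1)

lemma hcont {p : ℝ} (hp : 1 < p) :
    Continuous (fun x : ℝ => Real.sign x * |x| ^ (p - 1)) := by
  have habs : Continuous (fun x : ℝ => |x| ^ (p - 1)) :=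
    continuous_abs.rpow_const (fun x => Or.inr (by linarith))
  rw [continuous_iff_continuousAt]
  intro x
  rcases lt_trichotomy x 0 with hx | hx | hx
  · have heq : (fun x : ℝ => Real.sign x * |x| ^ (p - 1)) =ᶠ[nhds x]
        (fun x : ℝ => -1 * |x| ^ (p - 1)) := by
      filter_upwards [Iio_mem_nhds hx] with y hy
      rw [Real.sign_of_neg hy]
    exact ContinuousAt.congr ((continuous_const.mul habs).continuousAt) heq.symm
  · subst hx
    have h0 : Real.sign (0:ℝ) * |(0:ℝ)| ^ (p - 1) = 0 := by simp [Real.sign_zero]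
    rw [ContinuousAt, h0]
    apply squeeze_zero_norm (a := fun x : ℝ => |x| ^ (p - 1))
    · intro t
      rw [Real.norm_eq_abs, abs_mul, abs_of_nonneg (Real.rpow_nonneg (abs_nonneg t) _)]
      have h1 : |Real.sign t| ≤ 1 := by
        rcases Real.sign_apply_eq t with h | h | h <;> rw [h] <;> norm_num
      calc |Real.sign t| * |t| ^ (p - 1) ≤ 1 * |t| ^ (p - 1) := by
            exact mul_le_mul_of_nonneg_right h1 (Real.rpow_nonneg (abs_nonneg t) _)
        _ = |t| ^ (p - 1) := one_mul _
    · have := habs.tendsto 0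
      simpa [Real.zero_rpow (by linarith : p - 1 ≠ 0)] using this
  · have heq : (fun x : ℝ => Real.sign x * |x| ^ (p - 1)) =ᶠ[nhds x]
        (fun x : ℝ => 1 * |x| ^ (p - 1)) := by
      filter_upwards [Ioi_mem_nhds hx] with y hy
      rw [Real.sign_of_pos hy]
    exact ContinuousAt.congr ((continuous_const.mul habs).continuousAt) heq.symm

lemma F_expand {w p : ℝ} (hw : 0 ≤ w) (hp : 1 ≤ p) {x y : ℝ} (hxy : x ≤ y) :
    y - x ≤ scalarF w p y - scalarF w p x := by
  have hc : 0 ≤ w * p / 2 := by nlinarith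
  have h1 := hmono hp hxy
  have := mul_le_mul_of_nonneg_left h1 hc
  simp only [scalarF]
  linarith

lemma F_strictMono {w p : ℝ} (hw : 0 ≤ w) (hp : 1 ≤ p) : StrictMono (scalarF w p) := by
  intro x y h
  have := F_expand hw hp h.le
  linarith

lemma F_surj {w p : ℝ} (hw : 0 ≤ w) (hp : 1 < p) : Function.Surjective (scalarF w p) := by
  have hc : Continuous (scalarF w p) := continuous_id.add (continuous_const.mul (hcont hp))
  apply hc.surjective
  · apply tendsto_atTop_mono' atTop ?_ tendsto_id
    filter_upwards [eventually_ge_atTop (0:ℝ)] with x hx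
    have h2 := sign_nonneg_mul (p := p) hx
    have hc2 : 0 ≤ w * p / 2 := by nlinarith
    simp only [scalarF, id_eq]
    nlinarith [mul_nonneg hc2 h2]
  · apply tendsto_atBot_mono' atBot ?_ tendsto_id
    filter_upwards [eventually_le_atBot (0:ℝ)] with x hx
    have h2 := sign_nonpos_mul (p := p) hx
    have hc2 : 0 ≤ w * p / 2 := by nlinarith
    simp only [scalarF, id_eq]
    nlinarith [mul_nonpos_of_nonneg_of_nonpos hc2 h2]

lemma scalarS_lip {w p : ℝ} (hw : 0 < w) (hp : 1 ≤ p) (x y : ℝ) :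
    |scalarS w p x - scalarS w p y| ≤ |x - y| := by
  rcases eq_or_lt_of_le hp with hp1 | hp1
  · -- p = 1 : soft thresholding
    subst hp1
    simp only [scalarS, if_pos rfl, eq_self_iff_true, if_true]
    set s : ℝ → ℝ := fun x => if w / 2 ≤ x then x - w / 2 else if x ≤ -(w / 2) then x + w / 2 else 0
      with hs
    have key : ∀ a c : ℝ, c ≤ a → 0 ≤ s a - s c ∧ s a - s c ≤ a - c := by
      intro a c hca
      simp only [hs]
      split_ifs <;> constructor <;> linarith
    rcases le_total y x with h | h
    · obtain ⟨h1, h2⟩ := key x y h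
      rw [abs_of_nonneg h1, abs_of_nonneg (by linarith)]
      exact h2
    · obtain ⟨h1, h2⟩ := key y x h
      rw [abs_sub_comm, abs_sub_comm x y, abs_of_nonneg h1, abs_of_nonneg (by linarith)]
      exact h2
  · -- p > 1
    have hFS : ∀ u, scalarF w p (scalarS w p u) = u := by
      intro u
      simp only [scalarS, if_neg (by linarith : p ≠ 1)]
      exact Function.invFun_eq (F_surj hw.le hp1 u)
    set X := scalarS w p x with hX
    set Y := scalarS w p y with hY
    rcases le_total X Y with h | h
    · have := F_expand hw.le hp h
      rw [hFS, hFS] at this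
      rw [abs_sub_comm, abs_of_nonneg (by linarith)]
      calc Y - X ≤ y - x := this
        _ ≤ |y - x| := le_abs_self _
        _ = |x - y| := abs_sub_comm _ _
    · have := F_expand hw.le hp h
      rw [hFS, hFS] at this
      rw [abs_of_nonneg (by linarith)]
      calc X - Y ≤ x - y := this
        _ ≤ |x - y| := le_abs_self _

lemma scalarS_zero {w p : ℝ} (hw : 0 < w) (hp : 1 ≤ p) : scalarS w p 0 = 0 := by
  rcases eq_or_lt_of_le hp with hp1 | hp1
  · subst hp1
    simp only [scalarS, if_pos rfl, eq_self_iff_true, if_true]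
    rw [if_neg (by linarith), if_neg (by linarith)]
  · simp only [scalarS, if_neg (by linarith : p ≠ 1)]
    have h0 : scalarF w p 0 = 0 := by simp [scalarF, Real.sign_zero]
    have hinj : Function.Injective (scalarF w p) := (F_strictMono hw.le hp).injective
    conv_lhs => rw [← h0]
    exact Function.leftInverse_invFun hinj 0

lemma scalarS_abs_le {w p : ℝ} (hw : 0 < w) (hp : 1 ≤ p) (x : ℝ) :
    |scalarS w p x| ≤ |x| := by
  have := scalarS_lip hw hp x 0
  simpa [scalarS_zero hw hp] using this

lemma lp_norm_mono {ι : Type*} (f g : lp (fun _ : ι => ℝ) 2) (h : ∀ i, |f i| ≤ |g i|) :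
    ‖f‖ ≤ ‖g‖ := by
  have h2 : (0:ℝ) < (2:ℝ≥0∞).toReal := by norm_num
  rw [lp.norm_eq_tsum_rpow h2 f, lp.norm_eq_tsum_rpow h2 g]
  apply Real.rpow_le_rpow (tsum_nonneg (fun i => Real.rpow_nonneg (norm_nonneg _) _)) ?_
    (by norm_num)
  apply Summable.tsum_le_tsum ?_ ((lp.memℓp f).summable h2) ((lp.memℓp g).summable h2)
  intro i
  exact Real.rpow_le_rpow (norm_nonneg _) (by simpa using h i) (by norm_num)

/-- The thresholded Landweber map `T f = S_{w,p}(f + K*(g - Kf))` is non-expansive. -/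
theorem thresholded_Landweber_map_nonexpansive
    {H H' : Type*} [NormedAddCommGroup H] [InnerProductSpace ℝ H] [CompleteSpace H]
    [NormedAddCommGroup H'] [InnerProductSpace ℝ H'] [CompleteSpace H']
    {Γ : Type*} (b : HilbertBasis Γ ℝ H)
    (K : H →L[ℝ] H') (hK : ‖K‖ < 1) (g : H')
    (p : ℝ) (hp : 1 ≤ p) (w : Γ → ℝ) (hw : ∀ γ, 0 < w γ) :
    ∀ v v' : H,
      ‖shrinkOp b w p (v + (ContinuousLinearMap.adjoint K) (g - K v)) -
          shrinkOp b w p (v' + (ContinuousLinearMap.adjoint K) (g - K v'))‖ ≤ ‖v - v'‖ := by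
  intro v v'
  classical
  set A : H → H := fun u => u + (ContinuousLinearMap.adjoint K) (g - K u) with hA
  have h2' : (0:ℝ) < (2:ℝ≥0∞).toReal := by norm_num
  -- membership in ℓ²
  have memc : ∀ f : H, Memℓp (fun γ => scalarS (w γ) p (b.repr f γ)) 2 := by
    intro f
    apply memℓp_gen
    have h2 : Summable (fun γ => ‖b.repr f γ‖ ^ (2:ℝ≥0∞).toReal) :=
      (lp.memℓp (b.repr f)).summable h2'
    refine Summable.of_nonneg_of_le (fun γ => ?_) (fun γ => ?_) h2
    · exact Real.rpow_nonneg (norm_nonneg _) _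
    · have := scalarS_abs_le (hw γ) hp (b.repr f γ)
      simp only [Real.norm_eq_abs]
      exact Real.rpow_le_rpow (abs_nonneg _) this (by norm_num)
  -- shrinkOp as repr.symm of the ℓ² element of shrunk coefficients
  have hshrink : ∀ f : H, shrinkOp b w p f =
      b.repr.symm (⟨fun γ => scalarS (w γ) p (b.repr f γ), memc f⟩ : lp (fun _ : Γ => ℝ) 2) := by
    intro f
    exact (b.hasSum_repr_symm ⟨fun γ => scalarS (w γ) p (b.repr f γ), memc f⟩).tsum_eq
  -- compare norms via ℓ²
  have key : ∀ f f' : H, ‖shrinkOp b w p f - shrinkOp b w p f'‖ ≤ ‖f - f'‖ := by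
    intro f f'
    rw [hshrink f, hshrink f', ← map_sub, b.repr.symm.norm_map]
    have : ‖f - f'‖ = ‖b.repr f - b.repr f'‖ := by rw [← map_sub, b.repr.norm_map]
    rw [this]
    apply lp_norm_mono
    intro γ
    have e1 : ((⟨fun γ => scalarS (w γ) p (b.repr f γ), memc f⟩ : lp (fun _ : Γ => ℝ) 2) -
        ⟨fun γ => scalarS (w γ) p (b.repr f' γ), memc f'⟩) γ =
        scalarS (w γ) p (b.repr f γ) - scalarS (w γ) p (b.repr f' γ) := rfl
    have e2 : (b.repr f - b.repr f') γ = b.repr f γ - b.repr f' γ := rfl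
    rw [e1, e2]
    exact scalarS_lip (hw γ) hp _ _
  refine le_trans (key (A v) (A v')) ?_
  -- the Landweber step is non-expansive
  have e1 : (g - K v) - (g - K v') = -(K (v - v')) := by rw [map_sub]; abel
  have hAv : A v - A v' = (v - v') - (ContinuousLinearMap.adjoint K) (K (v - v')) := by
    simp only [hA]
    rw [show v + (ContinuousLinearMap.adjoint K) (g - K v) -
        (v' + (ContinuousLinearMap.adjoint K) (g - K v')) =
        (v - v') + ((ContinuousLinearMap.adjoint K) (g - K v) -
          (ContinuousLinearMap.adjoint K) (g - K v')) by abel]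
    rw [← map_sub, e1, map_neg]
    abel
  rw [hAv]
  set u := v - v' with hu
  have hinner : (inner ℝ u ((ContinuousLinearMap.adjoint K) (K u)) : ℝ) = ‖K u‖ ^ 2 := by
    rw [ContinuousLinearMap.adjoint_inner_right]
    exact real_inner_self_eq_norm_sq _
  have hnormT : ‖(ContinuousLinearMap.adjoint K) (K u)‖ ≤ ‖K u‖ := by
    calc ‖(ContinuousLinearMap.adjoint K) (K u)‖ ≤ ‖ContinuousLinearMap.adjoint K‖ * ‖K u‖ :=
          ContinuousLinearMap.le_opNorm _ _
      _ = ‖K‖ * ‖K u‖ := by rw [ContinuousLinearMap.adjoint.norm_map K]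
      _ ≤ 1 * ‖K u‖ := mul_le_mul_of_nonneg_right hK.le (norm_nonneg _)
      _ = ‖K u‖ := one_mul _
  have hsq : ‖u - (ContinuousLinearMap.adjoint K) (K u)‖ ^ 2 ≤ ‖u‖ ^ 2 := by
    rw [norm_sub_sq_real, hinner]
    nlinarith [norm_nonneg (K u), norm_nonneg ((ContinuousLinearMap.adjoint K) (K u))]
  nlinarith [norm_nonneg (u - (ContinuousLinearMap.adjoint K) (K u)), norm_nonneg u]
end

section
/- Let H and H' be real Hilbert spaces, K : H → H' a bounded linear operator with operator norm strictly less than 1, g ∈ H', p ∈ [1,2], (φ_γ)_{γ∈Γ} an orthonormal basis of H, and w = (w_γ)_{γ∈Γ} a sequence of weights with w_γ ≥ c for some c > 0. Let fⁿ = S_{w,p}(fⁿ⁻¹ + K*(g − K fⁿ⁻¹)) be the iterates starting from some f⁰ ∈ H, suppose the fⁿ converge weakly to f* ∈ H, and set uⁿ = fⁿ − f* and h = f* + K*(g − K f*). Then ‖S_{w,p}(h + uⁿ) − S_{w,p}(h) − uⁿ‖ → 0 as n → ∞. -/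
open scoped ENNReal
open Filter

namespace ShrinkAux

/-! ### Scalar lemmas -/

lemma g_mono {q : ℝ} (hq : 0 < q) : Monotone (fun x : ℝ => Real.sign x * |x| ^ q) := by
  intro x y hxy
  rcases lt_trichotomy x 0 with hx | hx | hx
  · rcases lt_trichotomy y 0 with hy | hy | hy
    · simp only [Real.sign_of_neg hx, Real.sign_of_neg hy, abs_of_neg hx, abs_of_neg hy]
      have : (-y) ^ q ≤ (-x) ^ q := Real.rpow_le_rpow (by linarith) (by linarith) hq.le
      nlinarith
    · subst hy
      simp only [Real.sign_of_neg hx, Real.sign_zero, abs_of_neg hx, zero_mul]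
      nlinarith [Real.rpow_nonneg (show (0:ℝ) ≤ -x by linarith) q]
    · simp only [Real.sign_of_neg hx, Real.sign_of_pos hy]
      nlinarith [Real.rpow_nonneg (abs_nonneg x) q, Real.rpow_nonneg (abs_nonneg y) q]
  · subst hx
    rcases eq_or_lt_of_le hxy with h | hy
    · simp [← h]
    · simp only [Real.sign_zero, Real.sign_of_pos hy, zero_mul, one_mul]
      positivity
  · have hy : 0 < y := lt_of_lt_of_le hx hxy
    simp only [Real.sign_of_pos hx, Real.sign_of_pos hy, one_mul, abs_of_pos hx, abs_of_pos hy]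
    exact Real.rpow_le_rpow hx.le hxy hq.le

lemma g_cont {q : ℝ} (hq : 0 < q) :
    Continuous (fun x : ℝ => Real.sign x * |x| ^ q) := by
  have key : (fun x : ℝ => Real.sign x * |x| ^ q)
      = fun x : ℝ => (max x 0) ^ q - (max (-x) 0) ^ q := by
    funext x
    rcases lt_trichotomy x 0 with hx | hx | hx
    · rw [Real.sign_of_neg hx, abs_of_neg hx, max_eq_right hx.le,
        max_eq_left (by linarith), Real.zero_rpow hq.ne']
      ring
    · subst hx; simp [Real.zero_rpow hq.ne']
    · rw [Real.sign_of_pos hx, abs_of_pos hx, max_eq_left hx.le,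
        max_eq_right (by linarith), Real.zero_rpow hq.ne']
      ring
  rw [key]
  have h1 : ∀ f : ℝ → ℝ, Continuous f → Continuous fun x : ℝ => (max (f x) 0) ^ q := by
    intro f hf
    rw [continuous_iff_continuousAt]
    intro x
    exact (Real.continuousAt_rpow_const _ _ (Or.inr hq.le)).comp
      ((continuous_max.comp (hf.prodMk continuous_const)).continuousAt)
  exact (h1 id continuous_id).sub (h1 (fun x => -x) continuous_neg)

lemma scalarF_zero (w p : ℝ) : scalarF w p 0 = 0 := by simp [scalarF]

lemma scalarF_strictMono {w p : ℝ} (hw : 0 < w) (hp : 1 < p) : StrictMono (scalarF w p) := by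
  intro x y hxy
  unfold scalarF
  have h := g_mono (q := p - 1) (by linarith) hxy.le
  have hc : 0 ≤ w * p / 2 := by positivity
  nlinarith [mul_le_mul_of_nonneg_left h hc]

lemma scalarF_surjective {w p : ℝ} (hw : 0 < w) (hp : 1 < p) :
    Function.Surjective (scalarF w p) := by
  have hcont : Continuous (scalarF w p) := by
    unfold scalarF
    exact continuous_id.add (continuous_const.mul (g_cont (by linarith)))
  have hc : 0 ≤ w * p / 2 := by positivity
  apply hcont.surjective
  · apply tendsto_atTop_mono' _ _ tendsto_id
    filter_upwards [eventually_ge_atTop (0:ℝ)] with x hx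
    have : 0 ≤ Real.sign x * |x| ^ (p - 1) := by
      have := g_mono (q := p - 1) (by linarith) hx
      simpa using this
    unfold scalarF; simp only [id_eq]; nlinarith [mul_nonneg hc this]
  · apply tendsto_atBot_mono' _ _ tendsto_id
    filter_upwards [eventually_le_atBot (0:ℝ)] with x hx
    have : Real.sign x * |x| ^ (p - 1) ≤ 0 := by
      have := g_mono (q := p - 1) (by linarith) hx
      simpa using this
    unfold scalarF; simp only [id_eq]; nlinarith [mul_nonpos_of_nonneg_of_nonpos hc this]

lemma scalarS_rightInv {w p : ℝ} (hw : 0 < w) (hp : 1 < p) (y : ℝ) :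
    scalarF w p (scalarS w p y) = y := by
  rw [scalarS, if_neg (by linarith)]
  exact Function.rightInverse_invFun (scalarF_surjective hw hp) y

/-- The key scalar estimate: `scalarS` is monotone and nonexpansive. -/
lemma scalarS_key {w p : ℝ} (hw : 0 < w) (hp : 1 ≤ p) {y z : ℝ} (hyz : y ≤ z) :
    scalarS w p y ≤ scalarS w p z ∧ scalarS w p z - scalarS w p y ≤ z - y := by
  rcases eq_or_lt_of_le hp with hp1 | hp1
  · rw [scalarS, if_pos hp1.symm]
    have hw2 : 0 < w / 2 := by linarith
    constructor <;> (split_ifs <;> linarith)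
  · have hS := scalarS_rightInv hw hp1
    set s := scalarS w p y with hs
    set t := scalarS w p z with ht
    have hFs : scalarF w p s = y := hS y
    have hFt : scalarF w p t = z := hS z
    have hst : s ≤ t := by
      by_contra hcon
      push_neg at hcon
      have := scalarF_strictMono hw hp1 hcon
      rw [hFs, hFt] at this; linarith
    refine ⟨hst, ?_⟩
    have h := g_mono (q := p - 1) (by linarith) hst
    have hc : 0 ≤ w * p / 2 := by positivity
    have h2 := mul_le_mul_of_nonneg_left h hc
    have hy' : y = s + w * p / 2 * (Real.sign s * |s| ^ (p - 1)) := hFs.symm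
    have hz' : z = t + w * p / 2 * (Real.sign t * |t| ^ (p - 1)) := hFt.symm
    simp only at h2
    linarith

lemma scalarS_zero {w p : ℝ} (hw : 0 < w) (hp : 1 ≤ p) : scalarS w p 0 = 0 := by
  rcases eq_or_lt_of_le hp with hp1 | hp1
  · rw [scalarS, if_pos hp1.symm]
    have hw2 : 0 < w / 2 := by linarith
    split_ifs <;> linarith
  · have h0 : scalarF w p (scalarS w p 0) = scalarF w p 0 := by
      rw [scalarS_rightInv hw hp1, scalarF_zero]
    exact (scalarF_strictMono hw hp1).injective h0

lemma scalarS_abs_le {w p : ℝ} (hw : 0 < w) (hp : 1 ≤ p) (x : ℝ) :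
    |scalarS w p x| ≤ |x| := by
  rcases le_total 0 x with hx | hx
  · have h := scalarS_key hw hp hx
    rw [scalarS_zero hw hp] at h
    rw [abs_of_nonneg (by linarith [h.1]), abs_of_nonneg hx]; linarith [h.2]
  · have h := scalarS_key hw hp hx
    rw [scalarS_zero hw hp] at h
    rw [abs_of_nonpos (by linarith [h.1]), abs_of_nonpos hx]; linarith [h.2]

lemma scalarS_firm {w p : ℝ} (hw : 0 < w) (hp : 1 ≤ p) (x y : ℝ) :
    (scalarS w p x - scalarS w p y) ^ 2 ≤ (x - y) * (scalarS w p x - scalarS w p y) := by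
  rcases le_total y x with h | h
  · have hk := scalarS_key hw hp h
    nlinarith [hk.1, hk.2]
  · have hk := scalarS_key hw hp h
    nlinarith [hk.1, hk.2]

/-! ### Hilbert-space lemmas -/

section Hil

variable {H : Type*} [NormedAddCommGroup H] [InnerProductSpace ℝ H] [CompleteSpace H]
  {Γ : Type*} (b : HilbertBasis Γ ℝ H) {w : Γ → ℝ} {p : ℝ}
  (hw : ∀ γ, 0 < w γ) (hp : 1 ≤ p)

include hw hp

lemma memlp_shrink (x : H) : Memℓp (fun γ => scalarS (w γ) p (b.repr x γ)) 2 := by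
  apply memℓp_gen
  have h2 : ((2:ℝ≥0∞)).toReal = 2 := by norm_num
  rw [h2]
  have hs : Summable fun γ => ‖b.repr x γ‖ ^ (2:ℝ) :=
    (lp.memℓp (b.repr x)).summable (by norm_num)
  apply Summable.of_nonneg_of_le (fun γ => by positivity) _ hs
  intro γ
  apply Real.rpow_le_rpow (by positivity) _ (by norm_num)
  exact scalarS_abs_le (hw γ) hp _

lemma shrink_repr (x : H) (γ : Γ) :
    b.repr (shrinkOp b w p x) γ = scalarS (w γ) p (b.repr x γ) := by
  set cf : lp (fun _ : Γ => ℝ) 2 :=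
    ⟨fun γ => scalarS (w γ) p (b.repr x γ), memlp_shrink b hw hp x⟩
  have hc : ∀ γ, cf γ = scalarS (w γ) p (b.repr x γ) := fun _ => rfl
  have hsum := b.hasSum_repr_symm cf
  have : shrinkOp b w p x = b.repr.symm cf := by
    rw [shrinkOp, ← hsum.tsum_eq]
  rw [this, LinearIsometryEquiv.apply_symm_apply, hc]

lemma inner_eq_tsum_repr (z z' : H) :
    (inner ℝ z z' : ℝ) = ∑' γ, b.repr z γ * b.repr z' γ := by
  rw [← b.tsum_inner_mul_inner z z']
  congr 1
  funext γ
  rw [b.repr_apply_apply, b.repr_apply_apply, real_inner_comm z (b γ)]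

lemma summable_repr_mul (z z' : H) : Summable fun γ => b.repr z γ * b.repr z' γ := by
  have := b.summable_inner_mul_inner z z'
  refine this.congr fun γ => ?_
  rw [b.repr_apply_apply, b.repr_apply_apply, real_inner_comm z (b γ)]

lemma shrink_firm (x y : H) :
    ‖shrinkOp b w p x - shrinkOp b w p y‖ ^ 2
      ≤ (inner ℝ (x - y) (shrinkOp b w p x - shrinkOp b w p y) : ℝ) := by
  set v := shrinkOp b w p x - shrinkOp b w p y with hv
  have hrv : ∀ γ, b.repr v γ = scalarS (w γ) p (b.repr x γ) - scalarS (w γ) p (b.repr y γ) := by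
    intro γ
    rw [hv, map_sub]
    simp only [lp.coeFn_sub, Pi.sub_apply]
    rw [shrink_repr b hw hp, shrink_repr b hw hp]
  have hru : ∀ γ, b.repr (x - y) γ = b.repr x γ - b.repr y γ := by
    intro γ; rw [map_sub]; simp [lp.coeFn_sub]
  rw [← real_inner_self_eq_norm_sq, inner_eq_tsum_repr b hw hp v v,
    inner_eq_tsum_repr b hw hp (x - y) v]
  apply Summable.tsum_le_tsum _ (summable_repr_mul b hw hp v v) (summable_repr_mul b hw hp (x - y) v)
  intro γ
  rw [hrv, hru]
  have := scalarS_firm (hw γ) hp (b.repr x γ) (b.repr y γ)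
  nlinarith [this]

lemma shrink_lip (x y : H) :
    ‖shrinkOp b w p x - shrinkOp b w p y‖ ≤ ‖x - y‖ := by
  have h1 := shrink_firm b hw hp x y
  have h2 := real_inner_le_norm (x - y) (shrinkOp b w p x - shrinkOp b w p y)
  have h3 := norm_nonneg (shrinkOp b w p x - shrinkOp b w p y)
  have h4 := norm_nonneg (x - y)
  nlinarith

end Hil

lemma le_of_sq_le_sq {a c : ℝ} (ha : 0 ≤ a) (hc : 0 ≤ c) (h : a ^ 2 ≤ c ^ 2) : a ≤ c := by
  nlinarith

end ShrinkAux

open ShrinkAux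

set_option maxHeartbeats 1000000 in
/-- If the thresholded Landweber iterates converge weakly to `f*`, then with
`h = f* + K*(g − K f*)` and `uⁿ = fⁿ − f*`, one has `‖S_{w,p}(h + uⁿ) − S_{w,p}(h) − uⁿ‖ → 0`. -/
theorem shrinkage_defect_tendsto_zero
    {H H' : Type*} [NormedAddCommGroup H] [InnerProductSpace ℝ H] [CompleteSpace H]
    [NormedAddCommGroup H'] [InnerProductSpace ℝ H'] [CompleteSpace H']
    {Γ : Type*} (b : HilbertBasis Γ ℝ H)
    (K : H →L[ℝ] H') (hK : ‖K‖ < 1) (g : H')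
    (p : ℝ) (hp1 : 1 ≤ p) (hp2 : p ≤ 2)
    (w : Γ → ℝ) (c : ℝ) (hc : 0 < c) (hw : ∀ γ, c ≤ w γ)
    (f : ℕ → H)
    (hf : ∀ n, f (n + 1) =
        shrinkOp b w p (f n + (ContinuousLinearMap.adjoint K) (g - K (f n))))
    (fstar : H)
    (hweak : ∀ x : H, Tendsto (fun n => (inner ℝ (f n) x : ℝ)) atTop (nhds (inner ℝ fstar x))) :
    Tendsto (fun n =>
        ‖shrinkOp b w p
              ((fstar + (ContinuousLinearMap.adjoint K) (g - K fstar)) + (f n - fstar)) -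
            shrinkOp b w p (fstar + (ContinuousLinearMap.adjoint K) (g - K fstar)) -
            (f n - fstar)‖)
      atTop (nhds 0) := by
  have hwpos : ∀ γ, 0 < w γ := fun γ => lt_of_lt_of_le hc (hw γ)
  set A := ContinuousLinearMap.adjoint K with hA
  set S : H → H := shrinkOp b w p with hS
  set h0 : H := fstar + A (g - K fstar) with hh0
  set u : ℕ → H := fun n => f n - fstar with hu
  -- basic facts
  have hlip : ∀ x y : H, ‖S x - S y‖ ≤ ‖x - y‖ := fun x y => shrink_lip b hwpos hp1 x y
  have hfirm : ∀ x y : H, ‖S x - S y‖ ^ 2 ≤ (inner ℝ (x - y) (S x - S y) : ℝ) :=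
    fun x y => shrink_firm b hwpos hp1 x y
  -- the iteration in terms of u
  have hiter : ∀ n, f (n + 1) = S (h0 + (u n - A (K (u n)))) := by
    intro n
    rw [hf n, hS]
    congr 1
    have hfn : f n = fstar + u n := by simp [hu]
    rw [hh0, hfn]
    simp only [map_add, map_sub]
    abel
  -- contraction property of I - A K
  have hcontr : ∀ v : H, ‖v - A (K v)‖ ^ 2 ≤ ‖v‖ ^ 2 - ‖K v‖ ^ 2 := by
    intro v
    have hinner : (inner ℝ v (A (K v)) : ℝ) = ‖K v‖ ^ 2 := by
      rw [hA, ContinuousLinearMap.adjoint_inner_right, real_inner_self_eq_norm_sq]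
    have hnormA : ‖A (K v)‖ ≤ ‖K v‖ := by
      calc ‖A (K v)‖ ≤ ‖A‖ * ‖K v‖ := A.le_opNorm _
        _ ≤ 1 * ‖K v‖ := by
            apply mul_le_mul_of_nonneg_right _ (norm_nonneg _)
            rw [hA]
            rw [show ‖ContinuousLinearMap.adjoint K‖ = ‖K‖ from
              ContinuousLinearMap.adjoint.norm_map K]
            exact hK.le
        _ = ‖K v‖ := one_mul _
    have hexp := norm_sub_sq_real v (A (K v))
    nlinarith [norm_nonneg (K v), norm_nonneg (A (K v))]
  -- weak convergence of u to 0
  have huweak : ∀ x : H, Tendsto (fun n => (inner ℝ (u n) x : ℝ)) atTop (nhds 0) := by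
    intro x
    have h1 := (hweak x).sub_const (inner ℝ fstar x)
    rw [sub_self] at h1
    convert h1 using 2 with n
    rw [hu]
    simp [inner_sub_left]
  -- step 1: ‖u (n+1) + q‖ ≤ ‖u n - A K u n‖ ≤ ‖u n‖ where q = fstar - S h0
  set q : H := fstar - S h0 with hq
  have hstep1a : ∀ n, ‖u (n + 1) + q‖ ≤ ‖u n - A (K (u n))‖ := by
    intro n
    have h1 : u (n + 1) + q = S (h0 + (u n - A (K (u n)))) - S h0 := by
      rw [hu, hq, ← hiter n]; exact sub_add_sub_cancel _ _ _
    rw [h1]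
    calc ‖S (h0 + (u n - A (K (u n)))) - S h0‖
        ≤ ‖(h0 + (u n - A (K (u n)))) - h0‖ := hlip _ _
      _ = ‖u n - A (K (u n))‖ := by congr 1; abel
  have hstep1 : ∀ n, ‖u (n + 1) + q‖ ≤ ‖u n‖ := by
    intro n
    refine (hstep1a n).trans ?_
    exact le_of_sq_le_sq (norm_nonneg _) (norm_nonneg _)
      (by nlinarith [hcontr (u n), sq_nonneg ‖K (u n)‖])
  -- step 2: inner (u (n+1)) q → 0
  have hstep2 : Tendsto (fun n => (inner ℝ (u (n + 1)) q : ℝ)) atTop (nhds 0) :=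
    (huweak q).comp (tendsto_add_atTop_nat 1)
  -- step 3: q = 0
  have hq0 : q = 0 := by
    by_contra hq0
    have hqne : ‖q‖ ≠ 0 := fun h => hq0 (norm_eq_zero.mp h)
    have hqn : 0 < ‖q‖ ^ 2 := by positivity
    have hkey : ∀ n, ‖u (n + 1)‖ ^ 2 ≤ ‖u n‖ ^ 2 - ‖q‖ ^ 2 - 2 * (inner ℝ (u (n + 1)) q : ℝ) := by
      intro n
      have h1 := hstep1 n
      have h2 := norm_add_sq_real (u (n + 1)) q
      have h1sq : ‖u (n + 1) + q‖ ^ 2 ≤ ‖u n‖ ^ 2 := by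
        have := mul_le_mul h1 h1 (norm_nonneg _) (norm_nonneg _)
        nlinarith
      linarith
    obtain ⟨N, hN⟩ := (Metric.tendsto_atTop.mp hstep2) (‖q‖ ^ 2 / 4) (by positivity)
    have hNlt : ∀ n, N ≤ n → |(inner ℝ (u (n + 1)) q : ℝ)| ≤ ‖q‖ ^ 2 / 4 := by
      intro n hn
      have := hN n hn
      rw [Real.dist_eq, sub_zero] at this
      linarith
    have hdec : ∀ k : ℕ, ‖u (N + k + 1)‖ ^ 2 ≤ ‖u (N + 1)‖ ^ 2 - k * (‖q‖ ^ 2 / 2) := by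
      intro k
      induction k with
      | zero => simp
      | succ k ih =>
        have h1 := hkey (N + k + 1)
        have h2 := hNlt (N + k + 1) (by omega)
        have h3 : |(inner ℝ (u (N + k + 1 + 1)) q : ℝ)| ≤ ‖q‖ ^ 2 / 4 := h2
        have habs := abs_le.mp h3
        have : (N + (k + 1) + 1) = (N + k + 1 + 1) := by omega
        rw [this]
        push_cast
        nlinarith [habs.1]
    obtain ⟨k, hk⟩ := exists_nat_gt (‖u (N + 1)‖ ^ 2 / (‖q‖ ^ 2 / 2))
    have := hdec k
    have hklarge : ‖u (N + 1)‖ ^ 2 < k * (‖q‖ ^ 2 / 2) := by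
      rw [div_lt_iff₀ (by positivity)] at hk
      linarith
    nlinarith [sq_nonneg ‖u (N + k + 1)‖]
  -- now q = 0, so S h0 = fstar
  have hSh0 : S h0 = fstar := (eq_of_sub_eq_zero hq0).symm
  simp only [hq0, add_zero] at hstep1 hstep1a
  -- a n := ‖u n‖ is antitone and converges
  set a : ℕ → ℝ := fun n => ‖u n‖ with ha
  have hanti : Antitone a := antitone_nat_of_succ_le fun n => by
    have := hstep1 n
    simpa [ha] using this
  have hbdd : BddBelow (Set.range a) := ⟨0, fun x ⟨n, hn⟩ => hn ▸ norm_nonneg _⟩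
  have hconv : Tendsto a atTop (nhds (⨅ n, a n)) := tendsto_atTop_ciInf hanti hbdd
  have hconv2 : Tendsto (fun n => a n ^ 2 - a (n + 1) ^ 2) atTop (nhds 0) := by
    have h1 : Tendsto (fun n => a n ^ 2) atTop (nhds ((⨅ n, a n) ^ 2)) := hconv.pow 2
    have h2 : Tendsto (fun n => a (n + 1) ^ 2) atTop (nhds ((⨅ n, a n) ^ 2)) :=
      h1.comp (tendsto_add_atTop_nat 1)
    have := h1.sub h2
    simpa using this
  -- τ n := ‖A (K (u n))‖ tends to 0
  set τ : ℕ → ℝ := fun n => ‖A (K (u n))‖ with hτ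
  have hτ_bound : ∀ n, τ n ^ 2 ≤ a n ^ 2 - a (n + 1) ^ 2 := by
    intro n
    have h1 : τ n ≤ ‖K (u n)‖ := by
      calc τ n ≤ ‖A‖ * ‖K (u n)‖ := A.le_opNorm _
        _ ≤ 1 * ‖K (u n)‖ := by
            apply mul_le_mul_of_nonneg_right _ (norm_nonneg _)
            rw [hA, show ‖ContinuousLinearMap.adjoint K‖ = ‖K‖ from
              ContinuousLinearMap.adjoint.norm_map K]
            exact hK.le
        _ = ‖K (u n)‖ := one_mul _
    have h2 := hcontr (u n)
    have h3 := hstep1a n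
    have h4 : a (n + 1) ^ 2 ≤ ‖u n - A (K (u n))‖ ^ 2 := by
      have := hstep1a n
      nlinarith [norm_nonneg (u (n + 1)), norm_nonneg (u n - A (K (u n)))]
    have h5 : ‖K (u n)‖ ^ 2 ≤ a n ^ 2 - a (n + 1) ^ 2 := by
      have : ‖u n - A (K (u n))‖ ^ 2 ≤ a n ^ 2 - ‖K (u n)‖ ^ 2 := h2
      nlinarith
    nlinarith [norm_nonneg (K (u n)), norm_nonneg (A (K (u n)))]
  have hτ_nonneg : ∀ n, 0 ≤ τ n := fun n => norm_nonneg _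
  have hτsq_to0 : Tendsto (fun n => τ n ^ 2) atTop (nhds 0) := by
    apply tendsto_of_tendsto_of_tendsto_of_le_of_le tendsto_const_nhds hconv2
    · intro n; positivity
    · exact hτ_bound
  have hτ_to0 : Tendsto τ atTop (nhds 0) := by
    have hsqrt : Tendsto (fun n => Real.sqrt (τ n ^ 2)) atTop (nhds (Real.sqrt 0)) :=
      (Real.continuous_sqrt.tendsto 0).comp hτsq_to0
    rw [Real.sqrt_zero] at hsqrt
    convert hsqrt using 2 with n
    rw [Real.sqrt_sq (hτ_nonneg n)]
  -- the defect estimate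
  set d : ℕ → H := fun n => (S (h0 + u n) - S h0) - u n with hd
  have hdest : ∀ n, ‖d n‖ ^ 2 ≤ (a n ^ 2 - a (n + 1) ^ 2) + 2 * τ n * a n + τ n ^ 2 := by
    intro n
    set v : H := S (h0 + u n) - S h0 with hv
    -- firm nonexpansiveness
    have hfirm' : ‖v‖ ^ 2 ≤ (inner ℝ (u n) v : ℝ) := by
      have := hfirm (h0 + u n) h0
      have harg : (h0 + u n) - h0 = u n := by abel
      rw [harg] at this
      exact this
    -- ‖d n‖² ≤ ‖u n‖² - ‖v‖²
    have hd1 : ‖d n‖ ^ 2 ≤ a n ^ 2 - ‖v‖ ^ 2 := by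
      have hexp : ‖v - u n‖ ^ 2 = ‖v‖ ^ 2 - 2 * (inner ℝ v (u n) : ℝ) + ‖u n‖ ^ 2 :=
        norm_sub_sq_real v (u n)
      have hdn : d n = v - u n := rfl
      rw [hdn, hexp, ha]
      have : (inner ℝ v (u n) : ℝ) = (inner ℝ (u n) v : ℝ) := real_inner_comm _ _
      rw [this]
      nlinarith [hfirm']
    -- ε n := S(h0+u n) - f (n+1), ‖ε‖ ≤ τ n
    have heps : ‖S (h0 + u n) - f (n + 1)‖ ≤ τ n := by
      rw [hiter n]
      calc ‖S (h0 + u n) - S (h0 + (u n - A (K (u n))))‖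
          ≤ ‖(h0 + u n) - (h0 + (u n - A (K (u n))))‖ := hlip _ _
        _ = τ n := by rw [hτ]; congr 1; abel
    -- u (n+1) = v - ε
    have hueq : u (n + 1) = v - (S (h0 + u n) - f (n + 1)) := by
      show f (n + 1) - fstar = (S (h0 + u n) - S h0) - (S (h0 + u n) - f (n + 1))
      rw [hSh0]
      abel
    have ha1 : a (n + 1) ≤ ‖v‖ + τ n := by
      rw [ha]
      simp only
      rw [hueq]
      calc ‖v - (S (h0 + u n) - f (n + 1))‖ ≤ ‖v‖ + ‖S (h0 + u n) - f (n + 1)‖ :=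
            norm_sub_le _ _
        _ ≤ ‖v‖ + τ n := by linarith [heps]
    have hvlip : ‖v‖ ≤ a n := by
      rw [hv, ha]
      calc ‖S (h0 + u n) - S h0‖ ≤ ‖(h0 + u n) - h0‖ := hlip _ _
        _ = ‖u n‖ := by congr 1; abel
    have ha1sq : a (n + 1) ^ 2 ≤ ‖v‖ ^ 2 + 2 * τ n * a n + τ n ^ 2 := by
      have h0le : 0 ≤ a (n + 1) := norm_nonneg _
      nlinarith [hτ_nonneg n, norm_nonneg v]
    nlinarith [hd1]
  -- conclude
  have hrhs : Tendsto (fun n => (a n ^ 2 - a (n + 1) ^ 2) + 2 * τ n * a n + τ n ^ 2)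
      atTop (nhds 0) := by
    have hτa : Tendsto (fun n => 2 * τ n * a n) atTop (nhds 0) := by
      have hab : ∀ n, a n ≤ a 0 := fun n => hanti (Nat.zero_le n)
      have h1 : Tendsto (fun n => 2 * τ n * a 0) atTop (nhds 0) := by
        have := (hτ_to0.const_mul 2).mul_const (a 0)
        simpa using this
      apply tendsto_of_tendsto_of_tendsto_of_le_of_le tendsto_const_nhds h1
      · intro n; positivity
      · intro n
        apply mul_le_mul_of_nonneg_left (hab n)
        positivity
    have := (hconv2.add hτa).add hτsq_to0
    simpa using this
  have hdsq : Tendsto (fun n => ‖d n‖ ^ 2) atTop (nhds 0) := by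
    apply tendsto_of_tendsto_of_tendsto_of_le_of_le tendsto_const_nhds hrhs
    · intro n; positivity
    · exact hdest
  have hdnorm : Tendsto (fun n => ‖d n‖) atTop (nhds 0) := by
    have hsqrt : Tendsto (fun n => Real.sqrt (‖d n‖ ^ 2)) atTop (nhds (Real.sqrt 0)) :=
      (Real.continuous_sqrt.tendsto 0).comp hdsq
    rw [Real.sqrt_zero] at hsqrt
    convert hsqrt using 2 with n
    rw [Real.sqrt_sq (norm_nonneg _)]
  exact hdnorm
end
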